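/- Let n ≥ 3 be odd and consider the graded abelian groups KO_*(E) = (ℤ_{2(n-1)}, ℤ/2, ℤ/2, 0, ℤ_{(n-1)/2}, 0, ℤ/2, ℤ/2) and KU_*(E) = (ℤ_{n-1}, 0, ℤ_{n-1}, 0, ℤ_{n-1}, 0, ℤ_{n-1}, 0) in degrees 0–7. Then in any exact sequence ⋯ → KO_6 →η KO_7 →c KU_7 → ⋯, the map η_6 is nonzero, whereas all groups KO_3, KO_5, KU_1, KU_3, KU_5, KU_7 vanish. -/
import Mathlib

lemma sub_of_equiv_zmod1 {G : Type} [AddCommGroup G] (h : Nonempty (G ≃+ ZMod 1)) :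
    Subsingleton G := by
  obtain ⟨e⟩ := h
  exact e.toEquiv.subsingleton

/-- The `K`-theory of the exotic Cuntz algebra `E_n` (`n` odd, `n ≥ 3`):
with `KO_* = (ℤ_{2(n-1)}, ℤ/2, ℤ/2, 0, ℤ_{(n-1)/2}, 0, ℤ/2, ℤ/2)` and
`KU_* = (ℤ_{n-1}, 0, ℤ_{n-1}, 0, ℤ_{n-1}, 0, ℤ_{n-1}, 0)`, in any exact
sequence `KO_6 →η KO_7 →c KU_7` the map `η` is nonzero, while
`KO_3, KO_5, KU_1, KU_3, KU_5, KU_7` all vanish. -/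
theorem stmt_16 (n : ℕ) (hn : 3 ≤ n) (hodd : Odd n)
    (KO KU : ℤ → Type) [∀ i, AddCommGroup (KO i)] [∀ i, AddCommGroup (KU i)]
    (hKO0 : Nonempty (KO 0 ≃+ ZMod (2 * (n - 1))))
    (hKO1 : Nonempty (KO 1 ≃+ ZMod 2)) (hKO2 : Nonempty (KO 2 ≃+ ZMod 2))
    (hKO3 : Nonempty (KO 3 ≃+ ZMod 1))
    (hKO4 : Nonempty (KO 4 ≃+ ZMod ((n - 1) / 2)))
    (hKO5 : Nonempty (KO 5 ≃+ ZMod 1))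
    (hKO6 : Nonempty (KO 6 ≃+ ZMod 2)) (hKO7 : Nonempty (KO 7 ≃+ ZMod 2))
    (hKUeven : ∀ j ∈ ({0, 2, 4, 6} : Set ℤ), Nonempty (KU j ≃+ ZMod (n - 1)))
    (hKUodd : ∀ j ∈ ({1, 3, 5, 7} : Set ℤ), Nonempty (KU j ≃+ ZMod 1)) :
    (∀ (η : KO 6 →+ KO 7) (c : KO 7 →+ KU 7), Function.Exact η c → η ≠ 0) ∧
    Subsingleton (KO 3) ∧ Subsingleton (KO 5) ∧ Subsingleton (KU 1) ∧
    Subsingleton (KU 3) ∧ Subsingleton (KU 5) ∧ Subsingleton (KU 7) := by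
  have hKU7 : Subsingleton (KU 7) := sub_of_equiv_zmod1 (hKUodd 7 (by norm_num))
  refine ⟨?_, sub_of_equiv_zmod1 hKO3, sub_of_equiv_zmod1 hKO5,
    sub_of_equiv_zmod1 (hKUodd 1 (by norm_num)),
    sub_of_equiv_zmod1 (hKUodd 3 (by norm_num)),
    sub_of_equiv_zmod1 (hKUodd 5 (by norm_num)), hKU7⟩
  intro η c hex hη
  obtain ⟨e⟩ := hKO7
  -- η is zero, c has trivial codomain, so exactness forces KO 7 trivial
  have : ∀ y : KO 7, y = 0 := by
    intro y
    have hy : c y = 0 := Subsingleton.elim _ _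
    obtain ⟨x, hx⟩ := (hex y).mp hy
    rw [hη] at hx
    simpa using hx.symm
  have h1 : e.symm 1 = 0 := this _
  have : (1 : ZMod 2) = 0 := by
    have := congrArg e h1
    simpa using this
  simp at this
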